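/- arXiv:math/0702780 — 2 statements merged into one kernel-verified Lean document; each statement's English description precedes it below -/
import Mathlib

section
/- Let p be a prime and let X, Y, G be nonempty subsets of F_p. Then there exists ξ ∈ G such that |X + ξ*Y| ≥ p |X| |Y| |G| / ( |X| |Y| |G| + p² ). -/
/-!
Let `E(ξ)` count the solutions of `a + ξ b = a' + ξ b'` in `X × Y × X × Y`. By Cauchy–Schwarz,
`(|X| |Y|)² ≤ |X + ξ Y| E(ξ)`. Expanding in a primitive additive character `ψ`,
`p E(ξ) = ∑ₜ |X̂(t)|² |Ŷ(tξ)|²`. Summing over `ξ ∈ G`, the term `t = 0` gives `|X|² |Y|² |G|`,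
while for `t ≠ 0` the points `tξ` are distinct, so Parseval bounds `∑_{ξ ∈ G} |Ŷ(tξ)|²` by `p |Y|`.
Hence `p ∑_{ξ ∈ G} E(ξ) ≤ |X|² |Y|² |G| + p² |X| |Y|`, and the `ξ ∈ G` minimising `E` does the job.
-/

open Finset Pointwise

section Collisions

variable {α β : Type*} [DecidableEq β]

theorem sq_card_le_card_image_mul_card_collisions (s : Finset α) (f : α → β) :
    #s ^ 2 ≤ #(s.image f) * #{x ∈ s ×ˢ s | f x.1 = f x.2} := by
  set fiber := fun c => {x ∈ s | f x = c}
  have hcoll : #{x ∈ s ×ˢ s | f x.1 = f x.2} = ∑ c ∈ s.image f, #(fiber c) ^ 2 := by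
    rw [card_eq_sum_card_fiberwise (f := fun x => f x.1) (t := s.image f)]
    · refine sum_congr rfl fun c _ => ?_
      rw [sq, ← card_product]
      congr 1
      ext ⟨x, y⟩
      simp only [fiber, mem_filter, mem_product]
      grind
    · intro x hx
      simp only [coe_filter, mem_product] at hx
      exact mem_image_of_mem f hx.1.1
  rw [card_eq_sum_card_image f s, hcoll]
  exact sq_sum_le_card_mul_sum_sq

end Collisions

section CommRing

variable {α R : Type*} [CommRing R] [DecidableEq R]

/-- Unlike `addEnergy X (ξ • Y)`, this counts pairs `(a, b) ∈ X × Y` rather than pairs in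
`X × ξ • Y`, so it does not collapse when `ξ` is not a unit. -/
def dilateEnergy (X Y : Finset R) (ξ : R) : ℕ :=
  #{x ∈ (X ×ˢ Y) ×ˢ (X ×ˢ Y) | x.1.1 + ξ * x.1.2 = x.2.1 + ξ * x.2.2}

theorem add_smul_finset_eq_image (X Y : Finset R) (ξ : R) :
    X + ξ • Y = (X ×ˢ Y).image fun x => x.1 + ξ * x.2 := by
  ext z
  simp [mem_add, mem_smul_finset, and_assoc]

theorem sq_card_mul_card_le_card_add_smul_mul_dilateEnergy (X Y : Finset R) (ξ : R) :
    (#X * #Y) ^ 2 ≤ #(X + ξ • Y) * dilateEnergy X Y ξ := by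
  rw [← card_product, add_smul_finset_eq_image]
  exact sq_card_le_card_image_mul_card_collisions _ _

variable [Fintype R] {ψ : AddChar R ℂ}

theorem card_mul_card_collisions_eq_sum_normSq (hψ : ψ.IsPrimitive) (s : Finset α) (f : α → R) :
    (Fintype.card R : ℝ) * #{x ∈ s ×ˢ s | f x.1 = f x.2} =
      ∑ t, Complex.normSq (∑ x ∈ s, ψ (t * f x)) := by
  have hnormSq : ∀ t, (Complex.normSq (∑ x ∈ s, ψ (t * f x)) : ℂ) =
      ∑ xy ∈ s ×ˢ s, ψ (t * (f xy.1 - f xy.2)) := by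
    intro t
    rw [← Complex.mul_conj, map_sum, sum_mul_sum, sum_product]
    refine sum_congr rfl fun x _ => sum_congr rfl fun y _ => ?_
    rw [← AddChar.map_neg_eq_conj, ← AddChar.map_add_eq_mul]
    ring_nf
  apply Complex.ofReal_injective
  push_cast
  simp_rw [hnormSq]
  rw [sum_comm]
  simp_rw [AddChar.sum_mulShift _ hψ, sub_eq_zero]
  rw [← sum_boole, mul_sum]
  push_cast [mul_boole]
  rfl

theorem sum_normSq_eq_card_mul_card (hψ : ψ.IsPrimitive) (A : Finset R) :
    ∑ t, Complex.normSq (∑ a ∈ A, ψ (t * a)) = Fintype.card R * #A := by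
  rw [← diag_card A, diag_eq_filter]
  exact (card_mul_card_collisions_eq_sum_normSq hψ A id).symm

theorem card_mul_dilateEnergy_eq_sum (hψ : ψ.IsPrimitive) (X Y : Finset R) (ξ : R) :
    (Fintype.card R : ℝ) * dilateEnergy X Y ξ =
      ∑ t, Complex.normSq (∑ a ∈ X, ψ (t * a)) * Complex.normSq (∑ b ∈ Y, ψ (t * ξ * b)) := by
  refine (card_mul_card_collisions_eq_sum_normSq hψ (X ×ˢ Y) fun x => x.1 + ξ * x.2).trans
    (sum_congr rfl fun t _ => ?_)
  rw [← Complex.normSq_mul, sum_mul_sum, sum_product]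
  refine congrArg _ (sum_congr rfl fun a _ => sum_congr rfl fun b _ => ?_)
  rw [← AddChar.map_add_eq_mul]
  ring_nf

end CommRing

theorem AddChar.exists_isPrimitive (F : Type*) [Field F] [Finite F] :
    ∃ ψ : AddChar F ℂ, ψ.IsPrimitive := by
  obtain ⟨ψ, hψ⟩ := AddChar.exists_apply_ne_zero.mpr (one_ne_zero (α := F))
  exact ⟨ψ, AddChar.IsPrimitive.of_ne_one fun h => hψ (by simp [h])⟩

section Field

variable {F : Type*} [Field F] [Fintype F] [DecidableEq F]

theorem sum_normSq_dilate_le {ψ : AddChar F ℂ} (hψ : ψ.IsPrimitive) (Y G : Finset F) (t : F) :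
    ∑ ξ ∈ G, Complex.normSq (∑ b ∈ Y, ψ (t * ξ * b)) ≤
      Fintype.card F * #Y + if t = 0 then (#G * #Y ^ 2 : ℝ) else 0 := by
  by_cases ht : t = 0
  · simp only [ht, zero_mul, AddChar.map_zero_eq_one, sum_const, nsmul_eq_mul, mul_one,
      Complex.normSq_natCast, if_pos, sq, le_add_iff_nonneg_left]
    positivity
  · calc ∑ ξ ∈ G, Complex.normSq (∑ b ∈ Y, ψ (t * ξ * b))
        = ∑ u ∈ G.image (t * ·), Complex.normSq (∑ b ∈ Y, ψ (u * b)) :=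
          (sum_image (f := fun u => Complex.normSq (∑ b ∈ Y, ψ (u * b)))
            fun _ _ _ _ h => mul_left_cancel₀ ht h).symm
      _ ≤ ∑ u, Complex.normSq (∑ b ∈ Y, ψ (u * b)) :=
          sum_le_univ_sum_of_nonneg fun _ => Complex.normSq_nonneg _
      _ = _ := by rw [sum_normSq_eq_card_mul_card hψ, if_neg ht, add_zero]

theorem card_mul_sum_dilateEnergy_le (X Y G : Finset F) :
    Fintype.card F * ∑ ξ ∈ G, dilateEnergy X Y ξ ≤
      #X * #Y * (#X * #Y * #G + Fintype.card F ^ 2) := by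
  obtain ⟨ψ, hψ⟩ := AddChar.exists_isPrimitive F
  have hX0 : Complex.normSq (∑ a ∈ X, ψ (0 * a)) = #X ^ 2 := by
    simp [Complex.normSq_natCast, sq]
  suffices (Fintype.card F : ℝ) * ∑ ξ ∈ G, (dilateEnergy X Y ξ : ℝ) ≤
      #X * #Y * (#X * #Y * #G + Fintype.card F ^ 2) by exact_mod_cast this
  calc (Fintype.card F : ℝ) * ∑ ξ ∈ G, (dilateEnergy X Y ξ : ℝ)
      = ∑ t, Complex.normSq (∑ a ∈ X, ψ (t * a)) *
          ∑ ξ ∈ G, Complex.normSq (∑ b ∈ Y, ψ (t * ξ * b)) := by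
        simp_rw [mul_sum, card_mul_dilateEnergy_eq_sum hψ]
        exact sum_comm
    _ ≤ ∑ t, Complex.normSq (∑ a ∈ X, ψ (t * a)) *
          (Fintype.card F * #Y + if t = 0 then (#G * #Y ^ 2 : ℝ) else 0) :=
        sum_le_sum fun t _ =>
          mul_le_mul_of_nonneg_left (sum_normSq_dilate_le hψ Y G t) (Complex.normSq_nonneg _)
    _ = #X * #Y * (#X * #Y * #G + Fintype.card F ^ 2) := by
        simp only [mul_add, sum_add_distrib, ← sum_mul, mul_ite, mul_zero, sum_ite_eq',
          mem_univ, if_true, sum_normSq_eq_card_mul_card hψ, hX0]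
        ring

theorem exists_card_add_smul_mul_ge (X Y : Finset F) {G : Finset F} (hG : G.Nonempty) :
    ∃ ξ ∈ G, Fintype.card F * #X * #Y * #G ≤
      #(X + ξ • Y) * (#X * #Y * #G + Fintype.card F ^ 2) := by
  set q := Fintype.card F
  obtain ⟨ξ, hξG, hmin⟩ := G.exists_min_image (dilateEnergy X Y) hG
  refine ⟨ξ, hξG, ?_⟩
  have hcs := sq_card_mul_card_le_card_add_smul_mul_dilateEnergy X Y ξ
  have havg : q * #G * dilateEnergy X Y ξ ≤ #X * #Y * (#X * #Y * #G + q ^ 2) :=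
    calc q * #G * dilateEnergy X Y ξ = q * (#G • dilateEnergy X Y ξ) := by
          rw [smul_eq_mul, mul_assoc]
      _ ≤ q * ∑ ξ ∈ G, dilateEnergy X Y ξ := by
          gcongr; exact card_nsmul_le_sum G (dilateEnergy X Y) _ hmin
      _ ≤ _ := card_mul_sum_dilateEnergy_le X Y G
  rcases Nat.eq_zero_or_pos (#X * #Y) with hN | hN
  · simp [mul_assoc, hN]
  refine le_of_mul_le_mul_left ?_ hN
  calc #X * #Y * (q * #X * #Y * #G) = q * #G * (#X * #Y) ^ 2 := by ring
    _ ≤ q * #G * (#(X + ξ • Y) * dilateEnergy X Y ξ) := by gcongr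
    _ = #(X + ξ • Y) * (q * #G * dilateEnergy X Y ξ) := by ring
    _ ≤ #(X + ξ • Y) * (#X * #Y * (#X * #Y * #G + q ^ 2)) := by gcongr
    _ = #X * #Y * (#(X + ξ • Y) * (#X * #Y * #G + q ^ 2)) := by ring

end Field

theorem exists_dilate_sum_large_general (p : ℕ) (hp : p.Prime)
    (X Y G : Finset (ZMod p)) (hG : G.Nonempty) :
    ∃ ξ ∈ G,
      (p : ℝ) * X.card * Y.card * G.card /
          ((X.card : ℝ) * Y.card * G.card + (p : ℝ) ^ 2)
        ≤ ((X + ξ • Y).card : ℝ) := by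
  have := Fact.mk hp
  obtain ⟨ξ, hξG, hξ⟩ := exists_card_add_smul_mul_ge X Y hG
  refine ⟨ξ, hξG, ?_⟩
  rw [ZMod.card] at hξ
  rw [div_le_iff₀ (by positivity [hp.pos])]
  exact_mod_cast hξ

/-- Lemma 5 of Garaev: a dilate sum estimate via trigonometric sums. -/
theorem exists_dilate_sum_large (p : ℕ) (hp : p.Prime)
    (X Y G : Finset (ZMod p)) (hX : X.Nonempty) (hY : Y.Nonempty) (hG : G.Nonempty) :
    ∃ ξ ∈ G,
      (p : ℝ) * X.card * Y.card * G.card /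
          ((X.card : ℝ) * Y.card * G.card + (p : ℝ) ^ 2)
        ≤ ((X + ξ • Y).card : ℝ) :=
  exists_dilate_sum_large_general p hp X Y G hG
end

section
/- Let p be a prime and let X, Y, G be nonempty subsets of F_p. Then there exists ξ ∈ G such that the number I₀ of solutions of x + ξ y = x₁ + ξ y₁ with x, x₁ ∈ X and y, y₁ ∈ Y satisfies I₀ ≤ |X|² |Y|² / p + p |X| |Y| / |G|. -/
/-!
For `ξ ∈ 𝔽_p` the count in question is the number of collisions of `(x, y) ↦ x + ξ y` on
`X × Y`. By Cauchy–Schwarz over the `p` fibres it is at least `|X|²|Y|²/p` for every `ξ`.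
Two distinct pairs collide for at most one `ξ`, so summing over all `ξ ∈ 𝔽_p` gives at most
`p|X||Y| + |X|²|Y|²`. Hence the excesses over `|X|²|Y|²/p` are nonnegative with total at most
`p|X||Y|`, and the smallest one over `ξ ∈ G` is at most `p|X||Y|/|G|`.
-/

open Finset

section Collision

variable {α β ι : Type*}

def collisionCount [DecidableEq β] (f : α → β) (s : Finset α) : ℕ :=
  #{uv ∈ s ×ˢ s | f uv.1 = f uv.2}

lemma collisionCount_eq_sum_sq [Fintype β] [DecidableEq β] (f : α → β) (s : Finset α) :
    collisionCount f s = ∑ b, #{a ∈ s | f a = b} ^ 2 := by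
  rw [collisionCount, card_eq_sum_card_fiberwise (f := fun uv => f uv.1) (t := univ)
    fun _ _ => mem_univ _]
  refine sum_congr rfl fun b _ => ?_
  rw [sq, ← card_product, filter_filter]
  congr 1
  ext ⟨u, v⟩
  simp only [mem_filter, mem_product]
  grind

lemma sq_card_le_card_mul_collisionCount [Fintype β] [DecidableEq β] (f : α → β)
    (s : Finset α) : #s ^ 2 ≤ Fintype.card β * collisionCount f s :=
  calc #s ^ 2 = (∑ b : β, #{a ∈ s | f a = b}) ^ 2 := by
        rw [card_eq_sum_card_fiberwise (f := f) fun _ _ => mem_univ _]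
    _ ≤ Fintype.card β * ∑ b, #{a ∈ s | f a = b} ^ 2 := sq_sum_le_card_mul_sum_sq
    _ = Fintype.card β * collisionCount f s := by rw [collisionCount_eq_sum_sq]

lemma sum_collisionCount_le [Fintype ι] [DecidableEq α] [DecidableEq β] (f : ι → α → β)
    (s : Finset α) (hf : ∀ u ∈ s, ∀ v ∈ s, u ≠ v → #{i | f i u = f i v} ≤ 1) :
    ∑ i, collisionCount (f i) s ≤ Fintype.card ι * #s + #s ^ 2 := by
  have double_count :
      ∑ i, collisionCount (f i) s = ∑ uv ∈ s ×ˢ s, #{i | f i uv.1 = f i uv.2} :=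
    sum_card_bipartiteAbove_eq_sum_card_bipartiteBelow
      (r := fun i (uv : α × α) => f i uv.1 = f i uv.2)
  rw [double_count, ← diag_union_offDiag, sum_union (disjoint_diag_offDiag s)]
  gcongr ?_ + ?_
  · calc _ ≤ #s.diag • Fintype.card ι := sum_le_card_nsmul _ _ _ fun _ _ => card_le_univ _
      _ = Fintype.card ι * #s := by rw [diag_card, smul_eq_mul, mul_comm]
  · calc _ ≤ #s.offDiag • 1 := sum_le_card_nsmul _ _ _ fun uv huv => by
          obtain ⟨hu, hv, huv⟩ := mem_offDiag.1 huv
          exact hf _ hu _ hv huv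
      _ ≤ #s ^ 2 := by rw [smul_eq_mul, mul_one, offDiag_card, sq]; exact Nat.sub_le _ _

end Collision

lemma exists_mem_le_add_div_card_of_sum_le {ι : Type*} [Fintype ι] {f : ι → ℝ} {B C : ℝ}
    (hB : ∀ i, B ≤ f i) (hsum : ∑ i, f i ≤ Fintype.card ι * B + C) {G : Finset ι}
    (hG : G.Nonempty) : ∃ i ∈ G, f i ≤ B + C / #G := by
  have hexcess : ∑ i ∈ G, (f i - B) ≤ ∑ _i ∈ G, C / #G :=
    calc ∑ i ∈ G, (f i - B) ≤ ∑ i, (f i - B) :=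
          sum_le_sum_of_subset_of_nonneg (subset_univ G) fun i _ _ => sub_nonneg.2 (hB i)
      _ ≤ C := by
          rw [sum_sub_distrib, sum_const, card_univ, nsmul_eq_mul]
          linarith
      _ = ∑ _i ∈ G, C / #G := by
          rw [sum_const, nsmul_eq_mul, mul_div_cancel₀]
          exact_mod_cast hG.card_pos.ne'
  obtain ⟨i, hi, h⟩ := exists_le_of_sum_le hG hexcess
  exact ⟨i, hi, by linarith⟩

lemma card_filter_add_mul_eq_eq_collisionCount {K : Type*} [Add K] [Mul K] [DecidableEq K]
    (X Y : Finset K) (ξ : K) :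
    #{t ∈ X ×ˢ X ×ˢ Y ×ˢ Y | t.1 + ξ * t.2.2.1 = t.2.1 + ξ * t.2.2.2}
      = collisionCount (fun u : K × K => u.1 + ξ * u.2) (X ×ˢ Y) := by
  refine card_nbij' (fun t => ((t.1, t.2.2.1), (t.2.1, t.2.2.2)))
    (fun uv => (uv.1.1, uv.2.1, uv.1.2, uv.2.2)) ?_ ?_ ?_ ?_ <;>
    simp +contextual [Set.MapsTo, Set.LeftInvOn]

section FiniteField

variable {K : Type*} [Field K] [Fintype K] [DecidableEq K]

lemma card_filter_add_mul_eq_le_one {u v : K × K} (huv : u ≠ v) :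
    #{ξ | u.1 + ξ * u.2 = v.1 + ξ * v.2} ≤ 1 := by
  refine card_le_one.2 fun ξ hξ η hη => ?_
  simp only [mem_filter, mem_univ, true_and] at hξ hη
  have h : (ξ - η) * (u.2 - v.2) = 0 := by linear_combination hξ - hη
  rcases mul_eq_zero.1 h with h | h
  · exact sub_eq_zero.1 h
  · have h2 : u.2 = v.2 := sub_eq_zero.1 h
    rw [h2, add_left_inj] at hξ
    exact absurd (Prod.ext hξ h2) huv

theorem exists_mem_collisionCount_add_mul_le (X Y G : Finset K) (hG : G.Nonempty) :
    ∃ ξ ∈ G, (collisionCount (fun u : K × K => u.1 + ξ * u.2) (X ×ˢ Y) : ℝ)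
      ≤ (#X : ℝ) ^ 2 * #Y ^ 2 / Fintype.card K + Fintype.card K * #X * #Y / #G := by
  set q := Fintype.card K
  have hq : (0 : ℝ) < q := by exact_mod_cast Fintype.card_pos
  have lower (ξ : K) : (#X : ℝ) ^ 2 * #Y ^ 2 / q
      ≤ collisionCount (fun u : K × K => u.1 + ξ * u.2) (X ×ˢ Y) := by
    rw [div_le_iff₀' hq, ← mul_pow, ← Nat.cast_mul, ← card_product]
    exact_mod_cast sq_card_le_card_mul_collisionCount _ (X ×ˢ Y)
  have total : ∑ ξ, (collisionCount (fun u : K × K => u.1 + ξ * u.2) (X ×ˢ Y) : ℝ)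
      ≤ q * ((#X : ℝ) ^ 2 * #Y ^ 2 / q) + q * #X * #Y := by
    have hcount := sum_collisionCount_le (fun ξ (u : K × K) => u.1 + ξ * u.2) (X ×ˢ Y)
      fun u _ v _ huv => card_filter_add_mul_eq_le_one huv
    rw [card_product, mul_pow, ← mul_assoc] at hcount
    rw [mul_div_cancel₀ _ hq.ne', add_comm]
    exact_mod_cast hcount
  exact exists_mem_le_add_div_card_of_sum_le lower total hG

end FiniteField

theorem exists_xi_energy_bound_general (p : ℕ) (hp : p.Prime)
    (X Y G : Finset (ZMod p)) (hG : G.Nonempty) :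
    ∃ ξ ∈ G,
      (((X ×ˢ X ×ˢ Y ×ˢ Y).filter
          (fun t : ZMod p × ZMod p × ZMod p × ZMod p =>
            t.1 + ξ * t.2.2.1 = t.2.1 + ξ * t.2.2.2)).card : ℝ)
        ≤ (X.card : ℝ) ^ 2 * (Y.card : ℝ) ^ 2 / p + (p : ℝ) * X.card * Y.card / G.card := by
  have : Fact p.Prime := ⟨hp⟩
  simpa only [card_filter_add_mul_eq_eq_collisionCount, ZMod.card]
    using exists_mem_collisionCount_add_mul_le X Y G hG

/-- There exists `ξ ∈ G` such that the number of solutions of `x + ξ y = x₁ + ξ y₁`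
with `x, x₁ ∈ X`, `y, y₁ ∈ Y` is at most `|X|²|Y|²/p + p|X||Y|/|G|`. -/
theorem exists_xi_energy_bound (p : ℕ) (hp : p.Prime)
    (X Y G : Finset (ZMod p)) (hX : X.Nonempty) (hY : Y.Nonempty) (hG : G.Nonempty) :
    ∃ ξ ∈ G,
      (((X ×ˢ X ×ˢ Y ×ˢ Y).filter
          (fun t : ZMod p × ZMod p × ZMod p × ZMod p =>
            t.1 + ξ * t.2.2.1 = t.2.1 + ξ * t.2.2.2)).card : ℝ)
        ≤ (X.card : ℝ) ^ 2 * (Y.card : ℝ) ^ 2 / p + (p : ℝ) * X.card * Y.card / G.card :=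
  exists_xi_energy_bound_general p hp X Y G hG
end
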